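/- arXiv:2012.07956 — 3 statements merged into one kernel-verified Lean document; each statement's English description precedes it below -/
import Mathlib

section
/- Let A be an N×N positive definite Hermitian matrix with eigenvalues λ_1, ..., λ_N, and let I_N be the identity matrix. Then P_{I_N}(A) = max over k ∈ {1,...,N} of the sum of λ_j^{-1} over j ≠ k. -/
open Matrix ComplexOrder

noncomputable def restTrace {N k : ℕ} (A B : Matrix (Fin N) (Fin N) ℂ)
    (P : Matrix (Fin N) (Fin k) ℂ) : ℝ :=
  ((Pᴴ * A * P)⁻¹ * (Pᴴ * B * P)).trace.re

/-- `jP A B = P_B(A)`: the supremum over all hyperplanes `V ⊂ ℂ^N` of `tr_{A|_V}(B|_V)`. -/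
noncomputable def jP {N : ℕ} (A B : Matrix (Fin N) (Fin N) ℂ) : ℝ :=
  sSup {x : ℝ | ∃ P : Matrix (Fin N) (Fin (N - 1)) ℂ,
    Function.Injective P.mulVecLin ∧ x = restTrace A B P}

/-!
Let `s ≠ 0` be `A`-orthogonal to the range of an injective `P : ℂ^(N-1) → ℂ^N`, so that
`ℂ^N = range P ⊕ ℂ s`. Then `P (PᴴAP)⁻¹ PᴴA` and `s sᴴA / sᴴAs` are the complementary
`A`-orthogonal projections onto these summands; multiplying their sum `1` by `A⁻¹` and taking
traces gives `tr((PᴴAP)⁻¹ PᴴP) = tr A⁻¹ - sᴴs / sᴴAs`. The Rayleigh quotient `sᴴAs / sᴴs` is at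
most `λ_max`, and equals it when `s` is an eigenvector for `λ_max` and `P` spans the other
eigenvectors. Hence the supremum is attained and equals
`Σ_j λ_j⁻¹ - λ_max⁻¹ = max_k Σ_{j ≠ k} λ_j⁻¹`.
-/

namespace Matrix

variable {K : Type*} [Field K] {m n : Type*} [Fintype m] [Fintype n]

theorem exists_ne_zero_mulVec_eq_zero_of_card_lt (B : Matrix m n K)
    (h : Fintype.card m < Fintype.card n) : ∃ v ≠ 0, B *ᵥ v = 0 := by
  obtain ⟨v, hv, hv0⟩ := (Submodule.ne_bot_iff _).mp <|
    LinearMap.ker_ne_bot_of_finrank_lt (f := B.mulVecLin) (by simpa using h)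
  exact ⟨v, hv0, hv⟩

variable [DecidableEq m] [DecidableEq n]

theorem mul_inv_mul_add_smul_vecMulVec_eq_one {P : Matrix n m K} {Q : Matrix m n K} {s t : n → K}
    (hcard : Fintype.card n = Fintype.card m + 1) (hQP : IsUnit (Q * P)) (hQs : Q *ᵥ s = 0)
    (htP : t ᵥ* P = 0) (hts : t ⬝ᵥ s ≠ 0) :
    P * (Q * P)⁻¹ * Q + (t ⬝ᵥ s)⁻¹ • vecMulVec s t = 1 := by
  set E := P * (Q * P)⁻¹ * Q + (t ⬝ᵥ s)⁻¹ • vecMulVec s t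
  have hinv : (Q * P)⁻¹ * (Q * P) = 1 := nonsing_inv_mul _ ((isUnit_iff_isUnit_det _).mp hQP)
  have hEP : E * P = P := by
    simp only [E, Matrix.add_mul, Matrix.mul_assoc, hinv, Matrix.mul_one, Matrix.smul_mul,
      vecMulVec_mul, htP, add_eq_left]
    exact smul_eq_zero_of_right _ (by ext; simp [vecMulVec_apply])
  have hEs : E *ᵥ s = s := by
    rw [add_mulVec, ← mulVec_mulVec, hQs, smul_mulVec, vecMulVec_mulVec]
    simp [hts]
  have hP : Function.Injective P.mulVecLin := fun u v huv => by
    simpa [mulVec_mulVec, Matrix.mul_assoc, hinv] using congrArg ((Q * P)⁻¹ * Q).mulVec huv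
  have hs : s ∉ LinearMap.range P.mulVecLin := by
    rintro ⟨u, rfl⟩
    have hu : u = 0 := by simpa [mulVec_mulVec, hinv] using congrArg ((Q * P)⁻¹).mulVec hQs
    simp [hu] at hts
  have htop : LinearMap.range P.mulVecLin ⊔ K ∙ s = ⊤ :=
    Submodule.eq_top_of_finrank_eq (by
      rw [Submodule.finrank_sup_span_singleton hs, LinearMap.finrank_range_of_inj hP]
      simp [hcard])
  have hE : E.mulVecLin = LinearMap.id := by
    rw [← LinearMap.eqLocus_eq_top, eq_top_iff, ← htop]
    refine sup_le ?_ ((Submodule.span_singleton_le_iff_mem _ _).mpr hEs)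
    rintro _ ⟨u, rfl⟩
    simp [mulVec_mulVec, hEP]
  rw [← mulVecLin_one] at hE
  exact Matrix.toLin'.injective hE

theorem trace_inv_conjTranspose_mul_mul_mul_eq_sub [StarRing K] {A : Matrix n n K}
    {P : Matrix n m K} {s : n → K} (hA : A.IsHermitian) (hAu : IsUnit A)
    (hcard : Fintype.card n = Fintype.card m + 1) (hPAP : IsUnit (Pᴴ * A * P))
    (hs : (Pᴴ * A) *ᵥ s = 0) (hsAs : star s ⬝ᵥ (A *ᵥ s) ≠ 0)
    (B : Matrix n n K) :
    ((Pᴴ * A * P)⁻¹ * (Pᴴ * B * P)).trace =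
      (A⁻¹ * B).trace - star s ⬝ᵥ (B *ᵥ s) / star s ⬝ᵥ (A *ᵥ s) := by
  have hsP : star s ᵥ* A ᵥ* P = 0 := by
    simpa [star_mulVec, hA.eq, vecMul_vecMul] using congrArg star hs
  have hdecomp := mul_inv_mul_add_smul_vecMulVec_eq_one hcard hPAP hs hsP
    (by rwa [← dotProduct_mulVec])
  have hAA : A * A⁻¹ = 1 := mul_nonsing_inv _ ((isUnit_iff_isUnit_det _).mp hAu)
  have htrace := congrArg (fun M => (M * (A⁻¹ * B)).trace) hdecomp
  simp only [Matrix.add_mul, Matrix.smul_mul, vecMulVec_mul, trace_add, trace_smul,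
    trace_vecMulVec, Matrix.mul_assoc, vecMul_vecMul, ← Matrix.mul_assoc A, hAA,
    Matrix.one_mul] at htrace
  rw [← htrace, trace_mul_comm P, dotProduct_comm s, ← dotProduct_mulVec, ← dotProduct_mulVec,
    smul_eq_mul, inv_mul_eq_div, add_sub_cancel_right]
  simp only [Matrix.mul_assoc]

end Matrix

namespace Matrix.IsHermitian

variable {𝕜 : Type*} [RCLike 𝕜] {n : Type*} [Fintype n] [DecidableEq n] {A : Matrix n n 𝕜}

theorem trace_cfc (hA : A.IsHermitian) (f : ℝ → ℝ) :
    (cfc f A).trace = ∑ i, (f (hA.eigenvalues i) : 𝕜) := by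
  rw [hA.cfc_eq, IsHermitian.cfc, Unitary.conjStarAlgAut_apply, trace_mul_cycle,
    Unitary.coe_star_mul_self, Matrix.one_mul, trace_diagonal]
  rfl

theorem trace_inv (hA : A.IsHermitian) (hAu : IsUnit A) :
    A⁻¹.trace = ∑ i, ((hA.eigenvalues i)⁻¹ : 𝕜) := by
  rw [nonsing_inv_eq_ringInverse, ← cfc_ringInverse_id (R := ℝ) _ hAu hA.isSelfAdjoint,
    hA.trace_cfc]
  simp

open scoped MatrixOrder in
theorem re_dotProduct_mulVec_le (hA : A.IsHermitian) {c : ℝ} (hc : ∀ i, hA.eigenvalues i ≤ c)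
    (x : n → 𝕜) : RCLike.re (star x ⬝ᵥ (A *ᵥ x)) ≤ c * RCLike.re (star x ⬝ᵥ x) := by
  have hAc : A ≤ algebraMap ℝ _ c := by
    rw [le_algebraMap_iff_spectrum_le hA.isSelfAdjoint, hA.spectrum_real_eq_range_eigenvalues]
    rintro _ ⟨i, rfl⟩
    exact hc i
  have := (Matrix.le_iff.mp hAc).re_dotProduct_nonneg x
  rw [Algebra.algebraMap_eq_smul_one, sub_mulVec, smul_mulVec, one_mulVec, dotProduct_sub,
    dotProduct_smul, map_sub, RCLike.smul_re] at this
  linarith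

end Matrix.IsHermitian

section restTrace

variable {N m : ℕ} {A : Matrix (Fin N) (Fin N) ℂ}

theorem restTrace_one_eq_sub (hA : A.PosDef) (hm : N = m + 1) {P : Matrix (Fin N) (Fin m) ℂ}
    (hP : Function.Injective P.mulVec) {s : Fin N → ℂ} (hs0 : s ≠ 0) (hs : (Pᴴ * A) *ᵥ s = 0) :
    restTrace A 1 P =
      ∑ j, (hA.isHermitian.eigenvalues j)⁻¹ - (star s ⬝ᵥ s).re / (star s ⬝ᵥ (A *ᵥ s)).re := by
  have hsAs : star s ⬝ᵥ (A *ᵥ s) = ((star s ⬝ᵥ (A *ᵥ s)).re : ℂ) :=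
    Complex.ext rfl (by simpa using hA.isHermitian.im_star_dotProduct_mulVec_self s)
  rw [restTrace, trace_inv_conjTranspose_mul_mul_mul_eq_sub hA.isHermitian hA.isUnit
    (by simp [hm]) (hA.conjTranspose_mul_mul_same hP).isUnit hs (hA.dotProduct_mulVec_pos hs0).ne',
    Matrix.mul_one, one_mulVec, Complex.sub_re, hA.isHermitian.trace_inv hA.isUnit, hsAs,
    Complex.div_ofReal_re]
  simp

theorem restTrace_one_le (hA : A.PosDef) (hm : N = m + 1) {P : Matrix (Fin N) (Fin m) ℂ}
    (hP : Function.Injective P.mulVec) {k : Fin N}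
    (hk : ∀ j, hA.isHermitian.eigenvalues j ≤ hA.isHermitian.eigenvalues k) :
    restTrace A 1 P ≤
      ∑ j, (hA.isHermitian.eigenvalues j)⁻¹ - (hA.isHermitian.eigenvalues k)⁻¹ := by
  obtain ⟨s, hs0, hs⟩ := exists_ne_zero_mulVec_eq_zero_of_card_lt (Pᴴ * A) (by simp [hm])
  rw [restTrace_one_eq_sub hA hm hP hs0 hs]
  have hsAs := hA.re_dotProduct_pos hs0
  have hrayleigh := hA.isHermitian.re_dotProduct_mulVec_le hk s
  simp only [RCLike.re_to_complex] at hsAs hrayleigh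
  gcongr
  rw [le_div_iff₀ hsAs, inv_mul_le_iff₀ (hA.eigenvalues_pos k)]
  exact hrayleigh

end restTrace

theorem exists_restTrace_one_eq_sub {n : ℕ} {A : Matrix (Fin (n + 1)) (Fin (n + 1)) ℂ}
    (hA : A.PosDef) (k : Fin (n + 1)) :
    ∃ P : Matrix (Fin (n + 1)) (Fin n) ℂ, Function.Injective P.mulVec ∧
      restTrace A 1 P =
        ∑ j, (hA.isHermitian.eigenvalues j)⁻¹ - (hA.isHermitian.eigenvalues k)⁻¹ := by
  set U : Matrix (Fin (n + 1)) (Fin (n + 1)) ℂ := ↑hA.isHermitian.eigenvectorUnitary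
  set s := (hA.isHermitian.eigenvectorBasis k).ofLp
  set P := U.submatrix id k.succAbove
  have hPP : Pᴴ * P = 1 := by
    rw [conjTranspose_submatrix, ← submatrix_mul _ _ _ _ _ Function.bijective_id,
      ← star_eq_conjTranspose, Unitary.coe_star_mul_self,
      submatrix_one _ Fin.succAbove_right_injective]
  have hP : Function.Injective P.mulVec := fun u v h => by
    simpa [mulVec_mulVec, hPP] using congrArg Pᴴ.mulVec h
  have hs0 : s ≠ 0 := by simpa [s] using hA.isHermitian.eigenvectorBasis.orthonormal.ne_zero k
  have hPs : Pᴴ *ᵥ s = 0 := by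
    ext a
    change (star U *ᵥ s) (k.succAbove a) = 0
    rw [hA.isHermitian.star_eigenvectorUnitary_mulVec k, Pi.single_apply,
      if_neg (k.succAbove_ne a)]
  have hAs : A *ᵥ s = (hA.isHermitian.eigenvalues k : ℂ) • s := by
    simpa using hA.isHermitian.mulVec_eigenvectorBasis k
  have hPAs : (Pᴴ * A) *ᵥ s = 0 := by rw [← mulVec_mulVec, hAs, mulVec_smul, hPs, smul_zero]
  have hss : 0 < (star s ⬝ᵥ s).re := (Complex.pos_iff.mp (dotProduct_star_self_pos_iff.mpr hs0)).1
  refine ⟨P, hP, ?_⟩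
  rw [restTrace_one_eq_sub hA rfl hP hs0 hPAs, hAs, dotProduct_smul, smul_eq_mul,
    Complex.re_ofReal_mul, div_mul_cancel_right₀ hss.ne']

/-- If `A` is an `N×N` positive definite Hermitian matrix with eigenvalues `λ_1, …, λ_N`,
then `P_{I_N}(A) = max_k Σ_{j ≠ k} λ_j⁻¹`. -/
theorem jP_identity_eq {N : ℕ} (hN : 0 < N) (A : Matrix (Fin N) (Fin N) ℂ) (hA : A.PosDef) :
    haveI : Nonempty (Fin N) := ⟨⟨0, hN⟩⟩
    jP A 1 =
      Finset.univ.sup' Finset.univ_nonempty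
        (fun k => ∑ j ∈ Finset.univ.erase k, (hA.isHermitian.eigenvalues j)⁻¹) := by
  obtain ⟨n, rfl⟩ := Nat.exists_eq_add_one.mpr hN
  simp only [Finset.sum_erase_eq_sub (Finset.mem_univ _)]
  set f := fun k => ∑ j, (hA.isHermitian.eigenvalues j)⁻¹ - (hA.isHermitian.eigenvalues k)⁻¹
  refine IsGreatest.csSup_eq ⟨?_, ?_⟩
  · obtain ⟨k, -, hk⟩ := Finset.exists_mem_eq_sup' Finset.univ_nonempty f
    obtain ⟨P, hP, hPk⟩ := exists_restTrace_one_eq_sub hA k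
    exact ⟨P, hP, hk.trans hPk.symm⟩
  · rintro _ ⟨P, hP, rfl⟩
    obtain ⟨k, hk⟩ := Finite.exists_max hA.isHermitian.eigenvalues
    exact (restTrace_one_le hA rfl hP hk).trans (Finset.le_sup' f (Finset.mem_univ k))
end

section
/- Suppose A, B, C are N×N complex matrices such that the 2N×2N block matrix M = [[A, C],[C̄^T, B]] is positive definite Hermitian. Then P_{I_N}(A - C B^{-1} C̄^T) + tr(B^{-1}) ≤ P_{I_{2N}}(M), where I_N and I_{2N} are identity matrices of rank N and 2N. -/
/-!
A hyperplane `range P` of `ℂ^N` lifts to the hyperplane `range Q` of `ℂ^{2N}` with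
`Q = [[P, 0], [X, 1]]`, `X = -B⁻¹CᴴP`. This choice of `X` makes `QᴴMQ = diag(PᴴSP, B)`, with `S`
the Schur complement, while the diagonal blocks of `QᴴQ` are `PᴴP + XᴴX` and `1`. Hence the
restricted trace of the identity over `range Q` equals the one over `range P` for `S`, plus
`tr((PᴴSP)⁻¹XᴴX) ≥ 0`, plus `tr(B⁻¹)`. The supremum defining `P_{I_{2N}}(M)` is finite since
`M ≥ c • 1` for some `c > 0` bounds every restricted trace by `(2N - 1) / c`.
-/

open Matrix ComplexOrder

namespace Matrix

section PositiveSemidefinite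

variable {𝕜 n : Type*} [RCLike 𝕜] [Fintype n] [DecidableEq n]

open scoped MatrixOrder in
theorem PosSemidef.trace_mul_nonneg {D X : Matrix n n 𝕜} (hD : D.PosSemidef)
    (hX : X.PosSemidef) : 0 ≤ (D * X).trace := by
  obtain ⟨B, rfl⟩ := CStarAlgebra.nonneg_iff_eq_star_mul_self.mp hD.nonneg
  rw [star_eq_conjTranspose, Matrix.mul_assoc, trace_mul_comm]
  exact (hX.mul_mul_conjTranspose_same B).trace_nonneg

open scoped MatrixOrder in
theorem PosDef.exists_pos_posSemidef_sub_smul_one {M : Matrix n n 𝕜} (hM : M.PosDef) :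
    ∃ c : ℝ, 0 < c ∧ (M - c • (1 : Matrix n n 𝕜)).PosSemidef := by
  cases isEmpty_or_nonempty n
  · exact ⟨1, one_pos, by rw [Subsingleton.elim (M - _) 0]; exact .zero⟩
  obtain ⟨c, hc, hcM⟩ := (CFC.exists_pos_algebraMap_le_iff hM.isHermitian.isSelfAdjoint).2
    fun x hx => hM.isStrictlyPositive.spectrum_pos hx
  exact ⟨c, hc, by rwa [Algebra.algebraMap_eq_smul_one] at hcM⟩

end PositiveSemidefinite

section Blocks

variable {R l m n k : Type*} [CommRing R]

theorem trace_submatrix_equiv [Fintype l] [Fintype m] (X : Matrix m m R) (e : l ≃ m) :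
    (X.submatrix e e).trace = X.trace :=
  Fintype.sum_equiv e _ _ fun _ => rfl

theorem trace_inv_fromBlocks_zero_mul [Fintype m] [Fintype n] [DecidableEq m] [DecidableEq n]
    {H : Matrix m m R} {B : Matrix n n R} (hH : IsUnit H) (hB : IsUnit B) (G₁₁ : Matrix m m R)
    (G₁₂ : Matrix m n R) (G₂₁ : Matrix n m R) (G₂₂ : Matrix n n R) :
    ((fromBlocks H 0 0 B)⁻¹ * fromBlocks G₁₁ G₁₂ G₂₁ G₂₂).trace =
      (H⁻¹ * G₁₁).trace + (B⁻¹ * G₂₂).trace := by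
  rw [inv_fromBlocks_zero₂₁_of_isUnit_iff _ _ _ (iff_of_true hH hB)]
  simp [fromBlocks_multiply, trace, Fintype.sum_sum_type]

theorem injective_submatrix_mulVec_equiv [Fintype k] [Fintype l] {Q : Matrix m l R}
    (hQ : Function.Injective Q.mulVec) (e : n ≃ m) (f : k ≃ l) :
    Function.Injective (Q.submatrix e f).mulVec := by
  intro v w h
  simp only [submatrix_mulVec_equiv] at h
  exact f.symm.surjective.injective_comp_right (hQ (e.surjective.injective_comp_right h))

theorem injective_one_submatrix_mulVec [Fintype l] [DecidableEq m] {g : l → m}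
    (hg : Function.Injective g) :
    Function.Injective ((1 : Matrix m m R).submatrix id g).mulVec := by
  classical
  intro v w h
  funext j
  simpa [mulVec, dotProduct, one_apply, hg.eq_iff] using congrFun h (g j)

variable [StarRing R] [Fintype m] [Fintype n] [DecidableEq n]

noncomputable def schurLift (B : Matrix n n R) (C : Matrix m n R) (P : Matrix m k R) :
    Matrix (m ⊕ n) (k ⊕ n) R :=
  fromBlocks P 0 (-(B⁻¹ * Cᴴ * P)) 1

theorem schurLift_conjTranspose_mul_fromBlocks_mul {A : Matrix m m R} {B : Matrix n n R}
    (hB : B.IsHermitian) (hBu : IsUnit B.det) (C : Matrix m n R) (P : Matrix m k R) :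
    (schurLift B C P)ᴴ * fromBlocks A C Cᴴ B * schurLift B C P =
      fromBlocks (Pᴴ * (A - C * B⁻¹ * Cᴴ) * P) 0 0 B := by
  have hBB : B⁻¹ * B = 1 := nonsing_inv_mul B hBu
  have hBB' : ∀ Y : Matrix n k R, B * (B⁻¹ * Y) = Y := fun Y => by
    rw [← Matrix.mul_assoc, mul_nonsing_inv B hBu, Matrix.one_mul]
  have hX : (-(B⁻¹ * Cᴴ * P))ᴴ = -(Pᴴ * C * B⁻¹) := by
    rw [conjTranspose_neg, conjTranspose_mul, conjTranspose_mul, conjTranspose_nonsing_inv,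
      hB.eq, conjTranspose_conjTranspose, Matrix.mul_assoc]
  rw [schurLift, fromBlocks_conjTranspose, hX, conjTranspose_zero, conjTranspose_one,
    fromBlocks_multiply, fromBlocks_multiply, fromBlocks_inj]
  refine ⟨?_, ?_, ?_, ?_⟩ <;>
    simp [Matrix.mul_assoc, hBB, hBB', sub_eq_add_neg, Matrix.add_mul, Matrix.mul_add]

theorem injective_schurLift_mulVec [Fintype k] {P : Matrix m k R}
    (hP : Function.Injective P.mulVec) (B : Matrix n n R) (C : Matrix m n R) :
    Function.Injective (schurLift B C P).mulVec := by
  intro v w h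
  rw [schurLift, fromBlocks_mulVec, fromBlocks_mulVec] at h
  have h₁ := congrArg (· ∘ Sum.inl) h
  have h₂ := congrArg (· ∘ Sum.inr) h
  simp only [Sum.elim_comp_inl, Sum.elim_comp_inr, zero_mulVec, add_zero, one_mulVec] at h₁ h₂
  have hl : v ∘ Sum.inl = w ∘ Sum.inl := hP h₁
  rw [hl, add_right_inj] at h₂
  rw [← Sum.elim_comp_inl_inr v, ← Sum.elim_comp_inl_inr w, hl, h₂]

end Blocks

end Matrix

section RestrictedTrace

open Function

variable {N k : ℕ}

theorem restTrace_submatrix_equiv {m l : Type*} [Fintype m] [Fintype l] [DecidableEq l]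
    (A G : Matrix m m ℂ) (Q : Matrix m l ℂ) (e : Fin N ≃ m) (f : Fin k ≃ l) :
    restTrace (A.submatrix e e) (G.submatrix e e) (Q.submatrix e f) =
      ((Qᴴ * A * Q)⁻¹ * (Qᴴ * G * Q)).trace.re := by
  simp only [restTrace, conjTranspose_submatrix, submatrix_mul_equiv, inv_submatrix_equiv,
    trace_submatrix_equiv]

theorem mul_restTrace_one_le {A : Matrix (Fin N) (Fin N) ℂ} (hA : A.PosDef) {c : ℝ}
    (hcA : (A - c • 1).PosSemidef) {P : Matrix (Fin N) (Fin k) ℂ} (hP : Injective P.mulVec) :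
    c * restTrace A 1 P ≤ k := by
  set H := Pᴴ * A * P
  have hH : H.PosDef := hA.conjTranspose_mul_mul_same hP
  have hsub : H - c • (Pᴴ * P) = Pᴴ * (A - c • 1) * P := by
    simp only [H, Matrix.mul_sub, Matrix.sub_mul, Matrix.mul_smul, Matrix.smul_mul, Matrix.mul_one]
  have h0 := (Complex.nonneg_iff.mp (hH.inv.posSemidef.trace_mul_nonneg
    (hsub ▸ hcA.conjTranspose_mul_mul_same P))).1
  rw [Matrix.mul_sub, nonsing_inv_mul _ (H.isUnit_iff_isUnit_det.mp hH.isUnit), Matrix.mul_smul,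
    trace_sub, trace_smul, trace_one] at h0
  simp only [restTrace, Matrix.mul_one]
  simpa using h0

theorem restTrace_le_jP {A : Matrix (Fin N) (Fin N) ℂ} (hA : A.PosDef)
    {P : Matrix (Fin N) (Fin (N - 1)) ℂ} (hP : Injective P.mulVecLin) :
    restTrace A 1 P ≤ jP A 1 := by
  obtain ⟨c, hc, hcA⟩ := hA.exists_pos_posSemidef_sub_smul_one
  refine le_csSup ⟨(N - 1 : ℕ) / c, ?_⟩ ⟨P, hP, rfl⟩
  rintro _ ⟨Q, hQ, rfl⟩
  rw [le_div_iff₀' hc]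
  exact mul_restTrace_one_le hA hcA hQ

theorem jP_le_of_forall_restTrace_le {A B : Matrix (Fin N) (Fin N) ℂ} {x : ℝ}
    (h : ∀ P : Matrix (Fin N) (Fin (N - 1)) ℂ, Injective P.mulVecLin → restTrace A B P ≤ x) :
    jP A B ≤ x :=
  csSup_le ⟨_, _, injective_one_submatrix_mulVec (Fin.castLE_injective (N.sub_le 1)), rfl⟩
    (by rintro _ ⟨P, hP, rfl⟩; exact h P hP)

theorem restTrace_schur_add_trace_inv_le {n : Type*} [Fintype n] [DecidableEq n]
    {A : Matrix (Fin N) (Fin N) ℂ} {B : Matrix n n ℂ} {C : Matrix (Fin N) n ℂ}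
    (hM : (fromBlocks A C Cᴴ B).PosDef) {P : Matrix (Fin N) (Fin k) ℂ} (hP : Injective P.mulVec) :
    restTrace (A - C * B⁻¹ * Cᴴ) 1 P + (B⁻¹).trace.re ≤
      (((schurLift B C P)ᴴ * fromBlocks A C Cᴴ B * schurLift B C P)⁻¹ *
        ((schurLift B C P)ᴴ * schurLift B C P)).trace.re := by
  have hB : B.PosDef := hM.submatrix Sum.inr_injective
  set X := -(B⁻¹ * Cᴴ * P)
  have hblock := schurLift_conjTranspose_mul_fromBlocks_mul (A := A) hB.isHermitian
    (B.isUnit_iff_isUnit_det.mp hB.isUnit) C P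
  have hH : (Pᴴ * (A - C * B⁻¹ * Cᴴ) * P).PosDef := by
    have := (hM.conjTranspose_mul_mul_same (injective_schurLift_mulVec hP B C)).submatrix
      Sum.inl_injective
    rwa [hblock] at this
  have hlift : (schurLift B C P)ᴴ * schurLift B C P = fromBlocks (Pᴴ * P + Xᴴ * X) Xᴴ X 1 := by
    simp [schurLift, X, fromBlocks_conjTranspose, fromBlocks_multiply]
  have hX := (Complex.nonneg_iff.mp (hH.inv.posSemidef.trace_mul_nonneg
    (posSemidef_conjTranspose_mul_self X))).1
  rw [hblock, hlift, trace_inv_fromBlocks_zero_mul hH.isUnit hB.isUnit, Matrix.mul_add,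
    trace_add, Matrix.mul_one, Complex.add_re, Complex.add_re, restTrace, Matrix.mul_one]
  linarith

end RestrictedTrace

/-- If the block matrix `M = [[A, C], [Cᴴ, B]]` is positive definite Hermitian, then
`P_{I_N}(A - C B⁻¹ Cᴴ) + tr(B⁻¹) ≤ P_{I_{2N}}(M)`. -/
theorem jP_schur_complement {N : ℕ} (A B C : Matrix (Fin N) (Fin N) ℂ)
    (hM : (Matrix.fromBlocks A C Cᴴ B).PosDef) :
    jP (A - C * B⁻¹ * Cᴴ) 1 + (B⁻¹).trace.re ≤
      jP ((Matrix.fromBlocks A C Cᴴ B).submatrix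
            (finSumFinEquiv (m := N) (n := N)).symm (finSumFinEquiv (m := N) (n := N)).symm) 1 := by
  set M := fromBlocks A C Cᴴ B
  set e := (finSumFinEquiv (m := N) (n := N)).symm
  let f : Fin (N + N - 1) ≃ Fin (N - 1) ⊕ Fin N := (finCongr (by omega)).trans finSumFinEquiv.symm
  rw [← le_sub_iff_add_le]
  refine jP_le_of_forall_restTrace_le fun P hP => le_sub_iff_add_le.mpr ?_
  have hQ := injective_submatrix_mulVec_equiv (injective_schurLift_mulVec hP B C) e f
  calc restTrace (A - C * B⁻¹ * Cᴴ) 1 P + (B⁻¹).trace.re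
      ≤ restTrace (M.submatrix e e) ((1 : Matrix _ _ ℂ).submatrix e e)
          ((schurLift B C P).submatrix e f) := by
        rw [restTrace_submatrix_equiv, Matrix.mul_one]
        exact restTrace_schur_add_trace_inv_le hM hP
    _ ≤ jP (M.submatrix e e) 1 := by
        rw [submatrix_one_equiv]
        exact restTrace_le_jP (hM.submatrix e.injective) hQ
end

section
/- Let ω and χ be Kähler forms (positive definite Hermitian (1,1)-forms at a point) on an n-dimensional complex vector space with n ≥ 2. If n ω^{n-1} - (n-1) ω^{n-2} ∧ χ > 0 as an (n-1,n-1)-form (i.e., its wedge with any nonzero positive (1,1)-form is a positive volume form), then for every l with 1 ≤ l ≤ n-1, n ω^l - l ω^{l-1} ∧ χ > 0 as an (l,l)-form, in the sense that its wedge product with θ^{n-l} is positive for every Kähler form θ. -/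
/-!
Restricted traces only grow when the subspace grows: in an `ω`-orthonormal basis,
`tr_{ω|_W}(χ|_W)` is the sum of the `χ`-values of the basis vectors, and an `ω`-orthonormal basis
of `W` extends, one vector at a time, to one of a hyperplane `V ⊇ W`. Since `χ ≥ 0`, this gives
`tr_{ω|_W}(χ|_W) ≤ tr_{ω|_V}(χ|_V) < n`.
-/

open Matrix ComplexOrder

namespace Matrix

def appendCol {m R : Type*} {k : ℕ} (P : Matrix m (Fin k) R) (u : m → R) :
    Matrix m (Fin (k + 1)) R :=
  of fun i => Fin.snoc (P i) (u i)

theorem mulVec_injective_of_mul_eq_one {l m R : Type*} [Fintype l] [Fintype m] [DecidableEq l]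
    [CommSemiring R] {A : Matrix l m R} {B : Matrix m l R} (h : A * B = 1) :
    Function.Injective B.mulVec :=
  Function.LeftInverse.injective (g := A.mulVec) fun v => by rw [mulVec_mulVec, h, one_mulVec]

section appendCol

variable {m R : Type*} [Fintype m] [CommSemiring R] [StarRing R] {k : ℕ} (M : Matrix m m R)
  (P : Matrix m (Fin k) R) (u : m → R)

@[simp] theorem conjTranspose_mul_mul_appendCol_castSucc_castSucc (a b : Fin k) :
    ((appendCol P u)ᴴ * M * appendCol P u) a.castSucc b.castSucc = (Pᴴ * M * P) a b := by
  simp [appendCol, mul_apply]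

@[simp] theorem conjTranspose_mul_mul_appendCol_castSucc_last (a : Fin k) :
    ((appendCol P u)ᴴ * M * appendCol P u) a.castSucc (Fin.last k) = ((Pᴴ * M) *ᵥ u) a := by
  simp [appendCol, mul_apply, mulVec, dotProduct]

@[simp] theorem conjTranspose_mul_mul_appendCol_last_last :
    ((appendCol P u)ᴴ * M * appendCol P u) (Fin.last k) (Fin.last k) = star u ⬝ᵥ M *ᵥ u := by
  rw [dotProduct_mulVec]
  simp [appendCol, mul_apply, vecMul, dotProduct]

theorem trace_conjTranspose_mul_mul_appendCol :
    ((appendCol P u)ᴴ * M * appendCol P u).trace = (Pᴴ * M * P).trace + star u ⬝ᵥ M *ᵥ u := by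
  simp [trace, Fin.sum_univ_castSucc]

end appendCol

namespace PosDef

variable {𝕜 m : Type*} [RCLike 𝕜] [Fintype m] {A : Matrix m m 𝕜}

open scoped MatrixOrder in
theorem exists_isUnit_det_conjTranspose_mul_mul_eq_one {ι : Type*} [Fintype ι] [DecidableEq ι]
    (hA : A.PosDef) {P : Matrix m ι 𝕜} (hP : Function.Injective P.mulVec) :
    ∃ S : Matrix ι ι 𝕜, IsUnit S.det ∧ (P * S)ᴴ * A * (P * S) = 1 := by
  have hG := hA.conjTranspose_mul_mul_same hP
  obtain ⟨B, hB⟩ := CStarAlgebra.nonneg_iff_eq_star_mul_self.mp hG.posSemidef.nonneg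
  have hBdet : IsUnit B.det := by
    have hGdet := (isUnit_iff_isUnit_det _).mp hG.isUnit
    rw [hB, det_mul] at hGdet
    exact isUnit_of_mul_isUnit_right hGdet
  refine ⟨B⁻¹, isUnit_nonsing_inv_det B hBdet, ?_⟩
  calc (P * B⁻¹)ᴴ * A * (P * B⁻¹) = (B⁻¹)ᴴ * (Pᴴ * A * P) * B⁻¹ := by
        simp only [conjTranspose_mul, Matrix.mul_assoc]
    _ = (B * B⁻¹)ᴴ * (B * B⁻¹) := by
        rw [hB, star_eq_conjTranspose, conjTranspose_mul]
        simp only [Matrix.mul_assoc]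
    _ = 1 := by rw [mul_nonsing_inv B hBdet, conjTranspose_one, Matrix.one_mul]

theorem exists_appendCol_conjTranspose_mul_mul_eq_one {k : ℕ} (hA : A.PosDef)
    {P : Matrix m (Fin k) 𝕜} (hP : Pᴴ * A * P = 1) (hk : k < Fintype.card m) :
    ∃ u, (appendCol P u)ᴴ * A * appendCol P u = 1 := by
  obtain ⟨v, hv, hv0⟩ : ∃ v ∈ LinearMap.ker (Pᴴ * A).mulVecLin, v ≠ 0 :=
    (Submodule.ne_bot_iff _).mp (LinearMap.ker_ne_bot_of_finrank_lt (by simpa using hk))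
  obtain ⟨r, hr, hrv⟩ := RCLike.pos_iff_exists_ofReal.mp (hA.dotProduct_mulVec_pos hv0)
  set u := (√r : 𝕜)⁻¹ • v
  have hPu : (Pᴴ * A) *ᵥ u = 0 := by
    rw [mulVec_smul, show (Pᴴ * A) *ᵥ v = 0 from hv, smul_zero]
  have huu : star u ⬝ᵥ A *ᵥ u = 1 := by
    simp only [u, mulVec_smul, dotProduct_smul, star_smul, smul_dotProduct, ← hrv]
    simp only [star_inv₀, RCLike.star_def, RCLike.conj_ofReal, smul_eq_mul, ← mul_assoc,
      ← mul_inv, ← RCLike.ofReal_mul, Real.mul_self_sqrt hr.le]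
    exact inv_mul_cancel₀ (by exact_mod_cast hr.ne')
  refine ⟨u, ?_⟩
  have hG := isHermitian_conjTranspose_mul_mul (appendCol P u) hA.1
  ext a b
  induction a using Fin.lastCases <;> induction b using Fin.lastCases
  case last.last => simp [huu]
  case last.cast b =>
    rw [← hG.apply, conjTranspose_mul_mul_appendCol_castSucc_last, hPu, Pi.zero_apply, star_zero,
      one_apply_ne (Fin.castSucc_lt_last b).ne']
  case cast.last a => simp [hPu]
  case cast.cast a b => simp [hP, one_apply]

end PosDef

end Matrix

section restTrace

variable {n k : ℕ} {ω χ : Matrix (Fin n) (Fin n) ℂ}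

theorem restTrace_mul_of_isUnit_det (P : Matrix (Fin n) (Fin k) ℂ) {S : Matrix (Fin k) (Fin k) ℂ}
    (hS : IsUnit S.det) : restTrace ω χ (P * S) = restTrace ω χ P := by
  have hSH : IsUnit Sᴴ.det := by rw [det_conjTranspose]; exact hS.star
  have hconj (M : Matrix (Fin n) (Fin n) ℂ) : (P * S)ᴴ * M * (P * S) = Sᴴ * (Pᴴ * M * P) * S := by
    simp only [conjTranspose_mul, Matrix.mul_assoc]
  unfold restTrace
  rw [hconj, hconj, Matrix.mul_inv_rev, Matrix.mul_inv_rev]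
  calc (S⁻¹ * ((Pᴴ * ω * P)⁻¹ * Sᴴ⁻¹) * (Sᴴ * (Pᴴ * χ * P) * S)).trace.re
      = (S⁻¹ * ((Pᴴ * ω * P)⁻¹ * (Pᴴ * χ * P) * S)).trace.re := by
        simp only [Matrix.mul_assoc, nonsing_inv_mul_cancel_left _ _ hSH]
    _ = ((Pᴴ * ω * P)⁻¹ * (Pᴴ * χ * P)).trace.re := by
        rw [trace_mul_comm, Matrix.mul_assoc _ S, mul_nonsing_inv _ hS, Matrix.mul_one]

theorem restTrace_of_conjTranspose_mul_mul_eq_one {P : Matrix (Fin n) (Fin k) ℂ}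
    (hP : Pᴴ * ω * P = 1) : restTrace ω χ P = (Pᴴ * χ * P).trace.re := by
  rw [restTrace, hP, inv_one, Matrix.one_mul]

theorem restTrace_appendCol {P : Matrix (Fin n) (Fin k) ℂ} (hP : Pᴴ * ω * P = 1)
    {u : Fin n → ℂ} (hu : (appendCol P u)ᴴ * ω * appendCol P u = 1) :
    restTrace ω χ (appendCol P u) = restTrace ω χ P + (star u ⬝ᵥ χ *ᵥ u).re := by
  rw [restTrace_of_conjTranspose_mul_mul_eq_one hP, restTrace_of_conjTranspose_mul_mul_eq_one hu,
    trace_conjTranspose_mul_mul_appendCol, Complex.add_re]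

theorem exists_restTrace_le_succ (hω : ω.PosDef) (hχ : χ.PosSemidef) (hk : k < n)
    {P : Matrix (Fin n) (Fin k) ℂ} (hP : Function.Injective P.mulVec) :
    ∃ Q : Matrix (Fin n) (Fin (k + 1)) ℂ, Function.Injective Q.mulVec ∧
      restTrace ω χ P ≤ restTrace ω χ Q := by
  obtain ⟨S, hS, hPS⟩ := hω.exists_isUnit_det_conjTranspose_mul_mul_eq_one hP
  obtain ⟨u, hu⟩ := hω.exists_appendCol_conjTranspose_mul_mul_eq_one hPS (by simpa using hk)
  refine ⟨appendCol (P * S) u, mulVec_injective_of_mul_eq_one hu, ?_⟩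
  rw [restTrace_appendCol hPS hu, restTrace_mul_of_isUnit_det P hS]
  simpa using (Complex.le_def.mp (hχ.dotProduct_mulVec_nonneg u)).1

theorem exists_restTrace_le (hω : ω.PosDef) (hχ : χ.PosSemidef) {m : ℕ} (hkm : k ≤ m)
    (hm : m ≤ n) {P : Matrix (Fin n) (Fin k) ℂ} (hP : Function.Injective P.mulVec) :
    ∃ Q : Matrix (Fin n) (Fin m) ℂ, Function.Injective Q.mulVec ∧
      restTrace ω χ P ≤ restTrace ω χ Q := by
  induction m, hkm using Nat.le_induction with
  | base => exact ⟨P, hP, le_rfl⟩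
  | succ m _ ih =>
    obtain ⟨Q, hQ, hPQ⟩ := ih (by omega)
    obtain ⟨Q', hQ', hQQ'⟩ := exists_restTrace_le_succ hω hχ (by omega) hQ
    exact ⟨Q', hQ', hPQ.trans hQQ'⟩

end restTrace

theorem hessian_quotient_lower_degree_general {n : ℕ}
    (ω χ : Matrix (Fin n) (Fin n) ℂ) (hω : ω.PosDef) (hχ : χ.PosDef)
    (h : ∀ P : Matrix (Fin n) (Fin (n - 1)) ℂ,
      Function.Injective P.mulVecLin → restTrace ω χ P < n) :
    ∀ l : ℕ, 1 ≤ l → l ≤ n - 1 →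
      ∀ P : Matrix (Fin n) (Fin l) ℂ,
        Function.Injective P.mulVecLin → restTrace ω χ P < n := by
  intro l _ hl P hP
  obtain ⟨Q, hQ, hPQ⟩ := exists_restTrace_le hω hχ.posSemidef hl (Nat.sub_le n 1) hP
  exact hPQ.trans_lt (h Q hQ)

/-- Let `ω, χ` be Kähler forms (positive definite Hermitian forms) on `ℂ^n`, `n ≥ 2`.
If `n ω^{n-1} - (n-1) ω^{n-2} ∧ χ > 0`, i.e. `tr_{ω|_V}(χ|_V) < n` on every hyperplane `V`,
then for every `1 ≤ l ≤ n-1`, `n ω^l - l ω^{l-1} ∧ χ > 0` as an `(l,l)`-form, i.e.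
`tr_{ω|_W}(χ|_W) < n` on every `l`-dimensional subspace `W`. -/
theorem hessian_quotient_lower_degree {n : ℕ} (hn : 2 ≤ n)
    (ω χ : Matrix (Fin n) (Fin n) ℂ) (hω : ω.PosDef) (hχ : χ.PosDef)
    (h : ∀ P : Matrix (Fin n) (Fin (n - 1)) ℂ,
      Function.Injective P.mulVecLin → restTrace ω χ P < n) :
    ∀ l : ℕ, 1 ≤ l → l ≤ n - 1 →
      ∀ P : Matrix (Fin n) (Fin l) ℂ,
        Function.Injective P.mulVecLin → restTrace ω χ P < n :=
  hessian_quotient_lower_degree_general ω χ hω hχ h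
end
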